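/- Let v solve the defocusing equation v'' + v'/a = v³ - v on (0,∞) with v'(0) = 0 and |v(0)| < 1. Set w = √a·v and E(a) = ½(w')² + w²/(8a²) + ½w² - w⁴/(4a). Then E(a) ≥ ½(w')² + (½ - v(0)²/4)w² > 0 and E'(a) ≤ (c/a)E(a) with c = v(0)²/(2 - v(0)²) < 1. Consequently E, w, and w' are bounded as a → ∞, so v(a) = O(a^{-1/2}). -/

import Mathlib

open Real Set

/-!
The mechanical energy `v'²/2 + v²/2 - v⁴/4` of the radial equation decreases, and since the
potential `x/2 - x²/4` (with `x = v²`) increases up to `x = 1`, this traps `v(a)²` below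
`v(0)² < 1`. For `w = √a·v` the energy `E` of `w'' + (1 + 1/(4a²))w = w³/a` satisfies
`E' = -w²/(4a³) + w⁴/(4a²) ≤ v(0)² w²/(4a)`, while `E ≥ (2 - v(0)²) w²/4`; hence `E' ≤ (c/a)E`.
Grönwall gives `E ≲ a^c`, so `w² ≲ a^c`, which turns the rate into the integrable `K a^(c-2)`
because `c < 1`, and a second Grönwall bounds `E`. If `E(a) = 0` then `v(a) = v'(a) = 0`, and
backward uniqueness for the (Lipschitz away from `0`) ODE forces `v ≡ 0`.
-/

theorem le_mul_exp_sub_of_hasDerivAt_le_mul {f f' G g : ℝ → ℝ} {a₀ : ℝ}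
    (hf : ∀ x ≥ a₀, HasDerivAt f (f' x) x) (hG : ∀ x ≥ a₀, HasDerivAt G (g x) x)
    (hle : ∀ x > a₀, f' x ≤ g x * f x) :
    ∀ x ≥ a₀, f x ≤ f a₀ * exp (G x - G a₀) := by
  have hφ : ∀ x ≥ a₀, HasDerivAt (fun x => f x * exp (-G x))
      ((f' x - g x * f x) * exp (-G x)) x := fun x hx => by
    refine ((hf x hx).mul (hG x hx).neg.exp).congr_deriv ?_
    simp only [Pi.neg_apply]
    ring
  have hanti : AntitoneOn (fun x => f x * exp (-G x)) (Ici a₀) := by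
    refine antitoneOn_of_hasDerivWithinAt_nonpos (convex_Ici a₀)
      (f' := fun x => (f' x - g x * f x) * exp (-G x))
      (fun x hx => (hφ x hx).continuousAt.continuousWithinAt) (fun x hx => ?_) (fun x hx => ?_)
    · rw [interior_Ici] at hx
      exact (hφ x (le_of_lt hx)).hasDerivWithinAt
    · rw [interior_Ici] at hx
      exact mul_nonpos_of_nonpos_of_nonneg (sub_nonpos.2 (hle x hx)) (exp_pos _).le
  intro x hx
  calc f x = f x * exp (-G x) * exp (G x) := by rw [mul_assoc, ← exp_add]; simp
    _ ≤ f a₀ * exp (-G a₀) * exp (G x) :=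
      mul_le_mul_of_nonneg_right (hanti self_mem_Ici hx hx) (exp_pos _).le
    _ = f a₀ * exp (G x - G a₀) := by rw [mul_assoc, ← exp_add]; ring_nf

theorem le_of_half_sub_sq_div_four_le {u : ℝ → ℝ} (hu : ContinuousOn u (Ici 0)) (hu0 : u 0 < 1)
    (hle : ∀ a ≥ 0, u a / 2 - u a ^ 2 / 4 ≤ u 0 / 2 - u 0 ^ 2 / 4) :
    ∀ a ≥ 0, u a ≤ u 0 := by
  intro a ha
  by_contra! hgt
  have hfar : 2 - u 0 ≤ u a := by nlinarith [hle a ha]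
  obtain ⟨t, ht, hut⟩ :=
    intermediate_value_Icc ha (hu.mono Icc_subset_Ici_self) ⟨hu0.le, by linarith⟩
  nlinarith [hle t ht.1]

theorem hasDerivAt_mechanicalEnergy_of_radial {v : ℝ → ℝ} {a : ℝ} (ha : 0 < a)
    (hv' : HasDerivAt v (deriv v a) a) (hv'' : HasDerivAt (deriv v) (deriv (deriv v) a) a)
    (hode : deriv (deriv v) a + deriv v a / a = v a ^ 3 - v a) :
    HasDerivAt (fun b => deriv v b ^ 2 / 2 + v b ^ 2 / 2 - v b ^ 4 / 4)
      (-deriv v a ^ 2 / a) a := by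
  refine ((((hv''.pow 2).div_const 2).add ((hv'.pow 2).div_const 2)).sub
    ((hv'.pow 4).div_const 4)).congr_deriv ?_
  rw [eq_sub_of_add_eq hode]
  field_simp
  ring

theorem sq_le_sq_zero_of_radial {v : ℝ → ℝ} (hv : ContDiffOn ℝ 1 v (Ici 0))
    (hv' : ∀ a > 0, HasDerivAt v (deriv v a) a)
    (hv'' : ∀ a > 0, HasDerivAt (deriv v) (deriv (deriv v) a) a)
    (hode : ∀ a > 0, deriv (deriv v) a + deriv v a / a = v a ^ 3 - v a)
    (hv'0 : derivWithin v (Ici 0) 0 = 0) (h0 : v 0 ^ 2 < 1) :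
    ∀ a ≥ 0, v a ^ 2 ≤ v 0 ^ 2 := by
  -- with `derivWithin` the energy is continuous on `[0, ∞)`, and `hv'0` evaluates it at `0`
  set p := derivWithin v (Ici 0)
  have hp : ∀ a > 0, p a = deriv v a := fun a ha => derivWithin_of_mem_nhds (Ici_mem_nhds ha)
  have hanti : AntitoneOn (fun a => p a ^ 2 / 2 + v a ^ 2 / 2 - v a ^ 4 / 4) (Ici 0) := by
    have hvc := hv.continuousOn
    have hpc : ContinuousOn p (Ici 0) :=
      hv.continuousOn_derivWithin (uniqueDiffOn_Ici 0) le_rfl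
    refine antitoneOn_of_hasDerivWithinAt_nonpos (convex_Ici 0) (by fun_prop)
      (f' := fun a => -deriv v a ^ 2 / a) (fun a ha => ?_) (fun a ha => ?_)
    all_goals rw [interior_Ici] at ha
    · rw [interior_Ici]
      refine ((hasDerivAt_mechanicalEnergy_of_radial ha (hv' a ha) (hv'' a ha)
        (hode a ha)).congr_of_eventuallyEq ?_).hasDerivWithinAt
      filter_upwards [Ioi_mem_nhds ha] with b hb
      rw [hp b hb]
    · exact div_nonpos_of_nonpos_of_nonneg (neg_nonpos.2 (sq_nonneg _)) (le_of_lt ha)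
  refine le_of_half_sub_sq_div_four_le (u := fun a => v a ^ 2) (hv.continuousOn.pow 2) h0 ?_
  intro a ha
  have := hanti self_mem_Ici ha ha
  simp only [p, hv'0] at this
  nlinarith [sq_nonneg (p a)]

theorem norm_phase_deriv_le {v : ℝ → ℝ} {t b : ℝ} (ht : 0 < t) (htb : t ≤ b)
    (hode : deriv (deriv v) b + deriv v b / b = v b ^ 3 - v b) (hvb : v b ^ 2 ≤ 1) :
    ‖(deriv v b, deriv (deriv v) b)‖ ≤ (1 + 1 / t) * ‖(v b, deriv v b)‖ := by
  simp only [Prod.norm_def, Real.norm_eq_abs]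
  set M := max |v b| |deriv v b|
  have hM : 0 ≤ M / t := div_nonneg ((abs_nonneg _).trans (le_max_left _ _)) ht.le
  have hcubic : |v b ^ 3 - v b| ≤ |v b| := by
    rw [show v b ^ 3 - v b = v b * (v b ^ 2 - 1) by ring, abs_mul]
    exact mul_le_of_le_one_right (abs_nonneg _)
      (abs_le.2 ⟨by nlinarith [sq_nonneg (v b)], by linarith⟩)
  have hfric : |deriv v b / b| ≤ M / t := by
    rw [abs_div, abs_of_pos (ht.trans_le htb)]
    exact div_le_div₀ ((abs_nonneg _).trans (le_max_right _ _)) (le_max_right _ _) ht htb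
  have hK : (1 + 1 / t) * M = M + M / t := by ring
  refine max_le (by linarith [le_max_right |v b| |deriv v b|]) ?_
  calc |deriv (deriv v) b| = |(v b ^ 3 - v b) - deriv v b / b| := by rw [← hode]; ring_nf
    _ ≤ |v b ^ 3 - v b| + |deriv v b / b| := abs_sub _ _
    _ ≤ M + M / t := add_le_add (hcubic.trans (le_max_left _ _)) hfric
    _ = (1 + 1 / t) * M := hK.symm

theorem eqOn_zero_of_radial {v : ℝ → ℝ}
    (hv' : ∀ a > 0, HasDerivAt v (deriv v a) a)
    (hv'' : ∀ a > 0, HasDerivAt (deriv v) (deriv (deriv v) a) a)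
    (hode : ∀ a > 0, deriv (deriv v) a + deriv v a / a = v a ^ 3 - v a)
    (hbd : ∀ a > 0, v a ^ 2 ≤ 1) {a₀ : ℝ} (hva₀ : v a₀ = 0) (hv'a₀ : deriv v a₀ = 0) :
    EqOn v 0 (Ioc 0 a₀) := by
  rintro t ⟨ht, hta₀⟩
  set g : ℝ → ℝ × ℝ := fun s => (v (a₀ - s), deriv v (a₀ - s))
  have hg : ∀ s ∈ Icc 0 (a₀ - t),
      HasDerivAt g (-(deriv v (a₀ - s), deriv (deriv v) (a₀ - s))) s := by
    intro s hs
    have hpos : 0 < a₀ - s := by linarith [hs.2]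
    have hrev : HasDerivAt (fun s => a₀ - s) (-1) s := by
      simpa using (hasDerivAt_id s).const_sub a₀
    simpa using ((hv' _ hpos).comp s hrev).prodMk ((hv'' _ hpos).comp s hrev)
  have hzero := eq_zero_of_abs_deriv_le_mul_abs_self_of_eq_zero_right (K := 1 + 1 / t)
    (fun s hs => (hg s hs).continuousAt.continuousWithinAt)
    (fun s hs => (hg s (Ico_subset_Icc_self hs)).hasDerivWithinAt)
    (by simp [g, hva₀, hv'a₀]) (fun s hs => by
      have hts : t ≤ a₀ - s := by linarith [hs.2]
      rw [norm_neg]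
      exact norm_phase_deriv_le ht hts (hode _ (ht.trans_le hts)) (hbd _ (ht.trans_le hts)))
    (a₀ - t) ⟨by linarith, le_rfl⟩
  simpa [g] using congrArg Prod.fst hzero

theorem radial_eq_zero_at_zero {v : ℝ → ℝ} (hv : ContinuousWithinAt v (Ioi 0) 0)
    (hv' : ∀ a > 0, HasDerivAt v (deriv v a) a)
    (hv'' : ∀ a > 0, HasDerivAt (deriv v) (deriv (deriv v) a) a)
    (hode : ∀ a > 0, deriv (deriv v) a + deriv v a / a = v a ^ 3 - v a)
    (hbd : ∀ a > 0, v a ^ 2 ≤ 1) {a₀ : ℝ} (ha₀ : 0 < a₀) (hva₀ : v a₀ = 0)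
    (hv'a₀ : deriv v a₀ = 0) : v 0 = 0 :=
  tendsto_nhds_unique hv <| tendsto_const_nhds.congr' <|
    (Filter.eventuallyEq_of_mem (Ioc_mem_nhdsGT ha₀)
      (eqOn_zero_of_radial hv' hv'' hode hbd hva₀ hv'a₀)).symm

theorem hasDerivAt_sqrt_mul {v : ℝ → ℝ} {a : ℝ} (ha : 0 < a) (hv' : HasDerivAt v (deriv v a) a) :
    HasDerivAt (fun b => √b * v b) (v a / (2 * √a) + √a * deriv v a) a :=
  ((hasDerivAt_sqrt ha.ne').mul hv').congr_deriv (by ring)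

theorem hasDerivAt_deriv_sqrt_mul {v : ℝ → ℝ}
    (hv' : ∀ a > 0, HasDerivAt v (deriv v a) a)
    (hv'' : ∀ a > 0, HasDerivAt (deriv v) (deriv (deriv v) a) a)
    (hode : ∀ a > 0, deriv (deriv v) a + deriv v a / a = v a ^ 3 - v a) {a : ℝ} (ha : 0 < a) :
    HasDerivAt (deriv fun b => √b * v b)
      (-(1 + 1 / (4 * a ^ 2)) * (√a * v a) + (√a * v a) ^ 3 / a) a := by
  have hsqrt := hasDerivAt_sqrt ha.ne'
  have hderiv : HasDerivAt (fun b => v b / (2 * √b) + √b * deriv v b)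
      (-(1 + 1 / (4 * a ^ 2)) * (√a * v a) + (√a * v a) ^ 3 / a) a := by
    refine (((hv' a ha).div (hsqrt.const_mul 2) (by positivity)).add
      (hsqrt.mul (hv'' a ha))).congr_deriv ?_
    rw [eq_sub_of_add_eq (hode a ha)]
    field_simp
    rw [show √a ^ 4 = (√a ^ 2) ^ 2 by ring, sq_sqrt ha.le]
    ring
  refine hderiv.congr_of_eventuallyEq ?_
  filter_upwards [Ioi_mem_nhds ha] with b hb
  exact (hasDerivAt_sqrt_mul hb (hv' b hb)).deriv

theorem sq_sqrt_mul_le {v : ℝ → ℝ} {m a : ℝ} (ha : 0 ≤ a) (hva : v a ^ 2 ≤ m) :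
    (√a * v a) ^ 2 ≤ m * a := by
  rw [mul_pow, sq_sqrt ha, mul_comm]
  exact mul_le_mul_of_nonneg_right hva ha

/-- Energy of `w'' + (1 + 1/(4a²)) w = w³/a`, which varies only through the explicit
dependence on `a`. -/
noncomputable def radialEnergy (w : ℝ → ℝ) (a : ℝ) : ℝ :=
  deriv w a ^ 2 / 2 + w a ^ 2 / (8 * a ^ 2) + w a ^ 2 / 2 - w a ^ 4 / (4 * a)

theorem hasDerivAt_radialEnergy {w : ℝ → ℝ} {a : ℝ} (ha : 0 < a)
    (hw' : HasDerivAt w (deriv w a) a)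
    (hw'' : HasDerivAt (deriv w) (-(1 + 1 / (4 * a ^ 2)) * w a + w a ^ 3 / a) a) :
    HasDerivAt (radialEnergy w) (-w a ^ 2 / (4 * a ^ 3) + w a ^ 4 / (4 * a ^ 2)) a := by
  have h8 : HasDerivAt (fun b : ℝ => 8 * b ^ 2) (8 * (2 * a ^ 1)) a :=
    (hasDerivAt_pow 2 a).const_mul 8
  have h4 : HasDerivAt (fun b : ℝ => 4 * b) (4 * 1) a := (hasDerivAt_id a).const_mul 4
  refine (((((hw''.pow 2).div_const 2).add ((hw'.pow 2).div h8 (by positivity))).add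
    ((hw'.pow 2).div_const 2)).sub ((hw'.pow 4).div h4 (by positivity))).congr_deriv ?_
  simp only [Pi.pow_apply]
  field_simp
  ring

theorem radialEnergy_ge {w : ℝ → ℝ} {m a : ℝ} (ha : 0 < a) (hwm : w a ^ 2 ≤ m * a) :
    deriv w a ^ 2 / 2 + (1 / 2 - m / 4) * w a ^ 2 ≤ radialEnergy w a := by
  have hquartic : w a ^ 4 / (4 * a) ≤ m * w a ^ 2 / 4 := by
    rw [div_le_iff₀ (by positivity)]
    nlinarith [mul_le_mul_of_nonneg_left hwm (sq_nonneg (w a))]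
  have : 0 ≤ w a ^ 2 / (8 * a ^ 2) := by positivity
  unfold radialEnergy
  linarith

theorem radialEnergy_deriv_le {w : ℝ → ℝ} {m a : ℝ} (hm : m < 2) (ha : 0 < a)
    (hwm : w a ^ 2 ≤ m * a) :
    -w a ^ 2 / (4 * a ^ 3) + w a ^ 4 / (4 * a ^ 2) ≤ m / (2 - m) / a * radialEnergy w a := by
  have hE := radialEnergy_ge ha hwm
  have hquartic : w a ^ 4 / (4 * a ^ 2) ≤ m * w a ^ 2 / (4 * a) := by
    rw [div_le_div_iff₀ (by positivity) (by positivity)]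
    nlinarith [mul_le_mul_of_nonneg_left hwm (mul_nonneg (sq_nonneg (w a)) (sq_nonneg a))]
  have hm0 : 0 ≤ m := nonneg_of_mul_nonneg_left ((sq_nonneg _).trans hwm) ha
  have h2m : 0 < 2 - m := by linarith
  have hcoef : 0 ≤ m / (2 - m) / a := by positivity
  calc -w a ^ 2 / (4 * a ^ 3) + w a ^ 4 / (4 * a ^ 2) ≤ m * w a ^ 2 / (4 * a) := by
        have : 0 ≤ w a ^ 2 / (4 * a ^ 3) := by positivity
        rw [neg_div]; linarith
    _ = m / (2 - m) / a * ((2 - m) / 4 * w a ^ 2) := by field_simp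
    _ ≤ m / (2 - m) / a * radialEnergy w a :=
        mul_le_mul_of_nonneg_left (by nlinarith [sq_nonneg (deriv w a)]) hcoef

theorem sq_le_mul_radialEnergy {w : ℝ → ℝ} {m a : ℝ} (hm : m < 2) (ha : 0 < a)
    (hwm : w a ^ 2 ≤ m * a) : w a ^ 2 ≤ 4 / (2 - m) * radialEnergy w a := by
  have := radialEnergy_ge ha hwm
  rw [div_mul_eq_mul_div, le_div_iff₀ (by linarith)]
  nlinarith [sq_nonneg (deriv w a)]

theorem radialEnergy_nonneg {w : ℝ → ℝ} {m a : ℝ} (hm : m < 2) (ha : 0 < a)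
    (hwm : w a ^ 2 ≤ m * a) : 0 ≤ radialEnergy w a :=
  nonneg_of_mul_nonneg_right ((sq_nonneg _).trans (sq_le_mul_radialEnergy hm ha hwm))
    (div_pos four_pos (by linarith))

section Growth

variable {w : ℝ → ℝ} {m : ℝ}

theorem radialEnergy_le_mul_rpow (hm : m < 2)
    (hw' : ∀ a > 0, HasDerivAt w (deriv w a) a)
    (hw'' : ∀ a > 0, HasDerivAt (deriv w) (-(1 + 1 / (4 * a ^ 2)) * w a + w a ^ 3 / a) a)
    (hwm : ∀ a > 0, w a ^ 2 ≤ m * a) :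
    ∀ a ≥ 1, radialEnergy w a ≤ radialEnergy w 1 * a ^ (m / (2 - m)) := by
  intro a ha
  have := le_mul_exp_sub_of_hasDerivAt_le_mul
    (fun x hx => hasDerivAt_radialEnergy (by linarith) (hw' x (by linarith)) (hw'' x (by linarith)))
    (G := fun x => m / (2 - m) * log x) (g := fun x => m / (2 - m) / x)
    (fun x hx => ((hasDerivAt_log (by positivity)).const_mul _).congr_deriv (by ring))
    (fun x hx => radialEnergy_deriv_le hm (by linarith) (hwm x (by linarith))) a ha
  rwa [log_one, mul_zero, sub_zero, mul_comm (m / (2 - m)), ← rpow_def_of_pos (by linarith)]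
    at this

/-- Feeding `w² ≲ E(1) a^c` back into `E' ≤ w⁴/(4a²)` improves the rate `c/a` to the
integrable `K a^(c-2)`, since `c < 1`. -/
theorem radialEnergy_deriv_le_rpow (hm : m < 2)
    (hw' : ∀ a > 0, HasDerivAt w (deriv w a) a)
    (hw'' : ∀ a > 0, HasDerivAt (deriv w) (-(1 + 1 / (4 * a ^ 2)) * w a + w a ^ 3 / a) a)
    (hwm : ∀ a > 0, w a ^ 2 ≤ m * a) {a : ℝ} (ha : 1 ≤ a) :
    -w a ^ 2 / (4 * a ^ 3) + w a ^ 4 / (4 * a ^ 2) ≤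
      4 * radialEnergy w 1 / (2 - m) ^ 2 * a ^ (m / (2 - m) - 2) * radialEnergy w a := by
  have ha0 : 0 < a := by linarith
  have hE := sq_le_mul_radialEnergy hm ha0 (hwm a ha0)
  have hpoly : w a ^ 2 ≤ 4 / (2 - m) * (radialEnergy w 1 * a ^ (m / (2 - m))) :=
    hE.trans (mul_le_mul_of_nonneg_left (radialEnergy_le_mul_rpow hm hw' hw'' hwm a ha)
      (div_pos four_pos (by linarith)).le)
  have hprod := mul_le_mul hE hpoly (sq_nonneg _)
    (mul_nonneg (div_pos four_pos (by linarith)).le (radialEnergy_nonneg hm ha0 (hwm a ha0)))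
  have : 0 ≤ w a ^ 2 / (4 * a ^ 3) := by positivity
  have : 2 - m ≠ 0 := by linarith
  calc -w a ^ 2 / (4 * a ^ 3) + w a ^ 4 / (4 * a ^ 2)
      ≤ w a ^ 2 * w a ^ 2 / (4 * a ^ 2) := by
        rw [neg_div, show w a ^ 4 = w a ^ 2 * w a ^ 2 by ring]; linarith
    _ ≤ 4 / (2 - m) * radialEnergy w a *
        (4 / (2 - m) * (radialEnergy w 1 * a ^ (m / (2 - m)))) / (4 * a ^ 2) := by gcongr
    _ = _ := by rw [rpow_sub ha0, rpow_two]; field_simp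

theorem radialEnergy_bddAbove (hm : m < 1)
    (hw' : ∀ a > 0, HasDerivAt w (deriv w a) a)
    (hw'' : ∀ a > 0, HasDerivAt (deriv w) (-(1 + 1 / (4 * a ^ 2)) * w a + w a ^ 3 / a) a)
    (hwm : ∀ a > 0, w a ^ 2 ≤ m * a) :
    ∃ C, ∀ a ≥ 1, radialEnergy w a ≤ C := by
  set c := m / (2 - m)
  set K := 4 * radialEnergy w 1 / (2 - m) ^ 2
  have hc : c < 1 := by rw [div_lt_one (by linarith)]; linarith
  have hK : 0 ≤ K :=
    div_nonneg (mul_nonneg zero_le_four (radialEnergy_nonneg (by linarith) one_pos (hwm 1 one_pos)))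
      (sq_nonneg _)
  have hG : ∀ x ≥ 1, HasDerivAt (fun x => K / (c - 1) * x ^ (c - 1)) (K * x ^ (c - 2)) x :=
    fun x hx => ((hasDerivAt_rpow_const (Or.inl (by positivity))).const_mul _).congr_deriv (by
      have : c - 1 ≠ 0 := by linarith
      field_simp
      ring_nf)
  refine ⟨radialEnergy w 1 * exp (K / (1 - c)), fun a ha =>
    (le_mul_exp_sub_of_hasDerivAt_le_mul
      (fun x hx =>
        hasDerivAt_radialEnergy (by linarith) (hw' x (by linarith)) (hw'' x (by linarith)))
      hG
      (fun x hx => radialEnergy_deriv_le_rpow (by linarith) hw' hw'' hwm hx.le) a ha).trans ?_⟩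
  have : 0 ≤ K / (1 - c) * a ^ (c - 1) :=
    mul_nonneg (div_nonneg hK (by linarith)) (rpow_nonneg (by linarith) _)
  have : K / (c - 1) * a ^ (c - 1) - K / (c - 1) * 1 ^ (c - 1) =
      K / (1 - c) - K / (1 - c) * a ^ (c - 1) := by
    have : c - 1 ≠ 0 := by linarith
    have : 1 - c ≠ 0 := by linarith
    rw [one_rpow]
    field_simp
    ring
  gcongr
  · exact radialEnergy_nonneg (by linarith) one_pos (hwm 1 one_pos)
  · linarith

end Growth

theorem abs_le_of_radialEnergy_le {w : ℝ → ℝ} {m C a : ℝ} (hm : m ≤ 1) (ha : 0 < a)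
    (hwm : w a ^ 2 ≤ m * a) (hC : radialEnergy w a ≤ C) :
    |w a| ≤ C + 1 ∧ |deriv w a| ≤ C + 1 := by
  have hE := radialEnergy_ge ha hwm
  have hquarter : w a ^ 2 / 4 ≤ (1 / 2 - m / 4) * w a ^ 2 := by nlinarith [sq_nonneg (w a)]
  have hC0 : 0 ≤ C := by nlinarith [sq_nonneg (deriv w a), sq_nonneg (w a)]
  constructor <;> refine abs_le_of_sq_le_sq ?_ (by linarith) <;>
    nlinarith [sq_nonneg (C - 1), sq_nonneg (deriv w a), sq_nonneg (w a)]

theorem radialEnergy_sqrt_mul_pos {v : ℝ → ℝ} (hv : ContinuousWithinAt v (Ioi 0) 0)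
    (hv' : ∀ a > 0, HasDerivAt v (deriv v a) a)
    (hv'' : ∀ a > 0, HasDerivAt (deriv v) (deriv (deriv v) a) a)
    (hode : ∀ a > 0, deriv (deriv v) a + deriv v a / a = v a ^ 3 - v a)
    (hbd : ∀ a > 0, v a ^ 2 ≤ 1) (hv0 : v 0 ≠ 0) {a : ℝ} (ha : 0 < a) :
    0 < radialEnergy (fun b => √b * v b) a := by
  by_contra! hE
  have hs : 0 < √a := sqrt_pos.2 ha
  have hlow := radialEnergy_ge (w := fun b => √b * v b) ha (sq_sqrt_mul_le ha.le (hbd a ha))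
  have hva : v a = 0 := by
    have : (√a * v a) ^ 2 = 0 := by nlinarith [sq_nonneg (deriv (fun b => √b * v b) a)]
    simpa [hs.ne'] using this
  have hv'a : deriv v a = 0 := by
    have : deriv (fun b => √b * v b) a ^ 2 = 0 := by nlinarith [sq_nonneg (√a * v a)]
    rw [(hasDerivAt_sqrt_mul ha (hv' a ha)).deriv, hva] at this
    simpa [hs.ne'] using this
  exact hv0 (radial_eq_zero_at_zero hv hv' hv'' hode hbd ha hva hv'a)

/-- Defocusing `μ = -1` equation with `|v(0)| < 1`: setting `w = √a·v` and
`E = ½(w')² + w²/(8a²) + ½w² - w⁴/(4a)`, one has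
`E ≥ ½(w')² + (½ - v(0)²/4)w²`, `E' ≤ (c/a)E` with `c = v(0)²/(2-v(0)²) < 1`,
and consequently `E`, `w`, `w'` are bounded and `v(a) = O(a^{-1/2})`. -/
theorem stmt9 (v : ℝ → ℝ)
    (hv1 : ContDiffOn ℝ 1 v (Set.Ici 0))
    (hv2 : ContDiffOn ℝ 2 v (Set.Ioi 0))
    (hode : ∀ a > (0:ℝ), deriv (deriv v) a + deriv v a / a = (v a) ^ 3 - v a)
    (hv'0 : derivWithin v (Set.Ici 0) 0 = 0)
    (h0 : |v 0| < 1) :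
    let w : ℝ → ℝ := fun a => Real.sqrt a * v a
    let E : ℝ → ℝ := fun a =>
      (deriv w a) ^ 2 / 2 + (w a) ^ 2 / (8 * a ^ 2) + (w a) ^ 2 / 2 - (w a) ^ 4 / (4 * a)
    let c : ℝ := (v 0) ^ 2 / (2 - (v 0) ^ 2)
    c < 1 ∧
    (∀ a > (0:ℝ),
      (deriv w a) ^ 2 / 2 + (1 / 2 - (v 0) ^ 2 / 4) * (w a) ^ 2 ≤ E a ∧
      deriv E a ≤ (c / a) * E a) ∧
    (v 0 ≠ 0 → ∀ a > (0:ℝ), 0 < E a) ∧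
    ∃ C : ℝ, ∀ a ≥ (1:ℝ),
      E a ≤ C ∧ |w a| ≤ C ∧ |deriv w a| ≤ C ∧ |v a| ≤ C / Real.sqrt a := by
  intro w E c
  have hv' : ∀ a > 0, HasDerivAt v (deriv v a) a := fun a ha =>
    ((hv2.differentiableOn (by norm_num)).differentiableAt (Ioi_mem_nhds ha)).hasDerivAt
  have hv'' : ∀ a > 0, HasDerivAt (deriv v) (deriv (deriv v) a) a := fun a ha =>
    (((hv2.deriv_of_isOpen (m := 1) isOpen_Ioi (by norm_num)).differentiableOn
      one_ne_zero).differentiableAt (Ioi_mem_nhds ha)).hasDerivAt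
  have hsq0 : v 0 ^ 2 < 1 := (sq_lt_one_iff_abs_lt_one _).2 h0
  have hbd := sq_le_sq_zero_of_radial hv1 hv' hv'' hode hv'0 hsq0
  have hw' : ∀ a > 0, HasDerivAt w (deriv w a) a := fun a ha =>
    (hasDerivAt_sqrt_mul ha (hv' a ha)).differentiableAt.hasDerivAt
  have hw'' : ∀ a > 0, HasDerivAt (deriv w) (-(1 + 1 / (4 * a ^ 2)) * w a + w a ^ 3 / a) a :=
    fun a ha => hasDerivAt_deriv_sqrt_mul hv' hv'' hode ha
  have hwm : ∀ a > 0, w a ^ 2 ≤ v 0 ^ 2 * a := fun a ha => sq_sqrt_mul_le ha.le (hbd a ha.le)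
  obtain ⟨C, hC⟩ := radialEnergy_bddAbove hsq0 hw' hw'' hwm
  refine ⟨by rw [div_lt_one (by linarith)]; linarith,
    fun a ha => ⟨radialEnergy_ge ha (hwm a ha), ?_⟩, fun hv0 a ha => ?_, C + 1, fun a ha => ?_⟩
  · show deriv (radialEnergy w) a ≤ c / a * radialEnergy w a
    rw [(hasDerivAt_radialEnergy ha (hw' a ha) (hw'' a ha)).deriv]
    exact radialEnergy_deriv_le (by linarith) ha (hwm a ha)
  · exact radialEnergy_sqrt_mul_pos ((hv1.continuousOn 0 self_mem_Ici).mono Ioi_subset_Ici_self)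
      hv' hv'' hode (fun b hb => (hbd b hb.le).trans hsq0.le) hv0 ha
  · obtain ⟨hwa, hw'a⟩ :=
      abs_le_of_radialEnergy_le hsq0.le (by linarith) (hwm a (by linarith)) (hC a ha)
    refine ⟨(hC a ha).trans (by linarith), hwa, hw'a, ?_⟩
    rwa [le_div_iff₀ (sqrt_pos.2 (by linarith)), mul_comm, ← abs_of_nonneg (sqrt_nonneg a),
      ← abs_mul]
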